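/- Let A, B ⊂ ℕ be finite sets and N := |A ∪ B|. Then Ψ(A) + Ψ(B) ≥ (Φ(4, N+3) − 5)/4. -/

import Mathlib

/-- `∇_4(n) := max{k ≥ 0 : k(k+1)/2 ≤ n}`. -/
def nabla4 (n : ℕ) : ℕ := Nat.findGreatest (fun k => Nat.choose (k + 1) 2 ≤ n) n

/-- `Φ(4, M) := Σ_{n=0}^{M-1} 2^{∇_4(n)}`. -/
def Phi4 (M : ℕ) : ℕ := ∑ n ∈ Finset.range M, 2 ^ nabla4 n

/-- `Ψ_L(E) := (1−L)·2^L − 1 + Σ_{n ∈ E} 2^{min(∇_4(n), L)}`, an integer. -/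
def PsiL (E : Finset ℕ) (L : ℕ) : ℤ :=
  (1 - (L : ℤ)) * 2 ^ L - 1 + ∑ n ∈ E, 2 ^ min (nabla4 n) L

/-- `Ψ(E) := sup_{L ∈ ℕ} Ψ_L(E)`. -/
noncomputable def Psi (E : Finset ℕ) : ℤ := sSup (Set.range (PsiL E))

/-!
Evaluate both `Ψ_L` at the same `L`. The two sums over `A` and `B` dominate the sum over `A ∪ B`,
which dominates the sum over `range |A ∪ B|` because `n ↦ 2 ^ min (∇₄ n) L` is monotone. Since
`∇₄` is constant on each block `[T k, T (k + 1))` of triangular numbers, that sum and `Φ(4, ·)`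
have closed forms, and for `L = ∇₄(N + 3) - 2` the resulting bound is exactly `(Φ(4, N+3) − 5)/4`.
-/

open Finset

/-- Stated through `choose`, so that `nabla4 n` is literally `Nat.findGreatest (tri · ≤ n) n`. -/
def tri (k : ℕ) : ℕ := (k + 1).choose 2

lemma tri_succ (k : ℕ) : tri (k + 1) = tri k + (k + 1) := by
  rw [tri, Nat.choose_succ_succ', Nat.choose_one_right, add_comm]
  rfl

lemma tri_monotone : Monotone tri := fun _ _ h => Nat.choose_le_choose 2 (by omega)

lemma le_tri (k : ℕ) : k ≤ tri k := by
  induction k with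
  | zero => exact le_rfl
  | succ k ih => rw [tri_succ]; omega

lemma le_nabla4_iff {k n : ℕ} : k ≤ nabla4 n ↔ tri k ≤ n := by
  refine ⟨fun h => (tri_monotone h).trans ?_, fun h => Nat.le_findGreatest ((le_tri k).trans h) h⟩
  exact Nat.findGreatest_spec (P := fun k => tri k ≤ n) (Nat.zero_le n) (Nat.zero_le n)

lemma nabla4_lt_iff {k n : ℕ} : nabla4 n < k ↔ n < tri k := by
  simpa using le_nabla4_iff.not

lemma nabla4_monotone : Monotone nabla4 := fun a _ h =>
  le_nabla4_iff.2 ((le_nabla4_iff.1 (le_refl (nabla4 a))).trans h)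

lemma nabla4_tri_add {k j : ℕ} (hj : j ≤ k) : nabla4 (tri k + j) = k :=
  le_antisymm (Nat.lt_succ_iff.1 (nabla4_lt_iff.2 (by rw [tri_succ]; omega)))
    (le_nabla4_iff.2 le_self_add)

lemma phi4_tri_add {k j : ℕ} (hj : j ≤ k + 1) :
    Phi4 (tri k + j) = Phi4 (tri k) + j * 2 ^ k := by
  rw [Phi4, Phi4, sum_range_add, add_right_inj,
    sum_congr rfl fun i hi => by rw [nabla4_tri_add (by simp at hi; omega)]]
  simp

lemma phi4_tri_add_two_pow (k : ℕ) : Phi4 (tri k) + 2 ^ k = k * 2 ^ k + 1 := by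
  induction k with
  | zero => rfl
  | succ k ih =>
    rw [tri_succ, phi4_tri_add le_rfl, pow_succ]
    linear_combination ih

lemma phi4_tri_add_add_two_pow {k j : ℕ} (hj : j ≤ k + 1) :
    Phi4 (tri k + j) + 2 ^ k = (k + j) * 2 ^ k + 1 := by
  rw [phi4_tri_add hj]
  linear_combination phi4_tri_add_two_pow k

lemma sum_range_two_pow_min_nabla4 (L j : ℕ) :
    ∑ n ∈ range (tri L + j), 2 ^ min (nabla4 n) L + 2 ^ L = (L + j) * 2 ^ L + 1 := by
  have hlow : ∑ n ∈ range (tri L), 2 ^ min (nabla4 n) L = Phi4 (tri L) :=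
    sum_congr rfl fun n hn => by rw [min_eq_left (nabla4_lt_iff.2 (mem_range.1 hn)).le]
  have hhigh : ∑ i ∈ range j, 2 ^ min (nabla4 (tri L + i)) L = j * 2 ^ L := by
    simp [min_eq_right (le_nabla4_iff.2 le_self_add)]
  rw [sum_range_add, hlow, hhigh]
  linear_combination phi4_tri_add_two_pow L

lemma sum_range_card_le_sum {M : Type*} [AddCommMonoid M] [PartialOrder M]
    [IsOrderedAddMonoid M] {f : ℕ → M} (hf : Monotone f) (s : Finset ℕ) :
    ∑ n ∈ range #s, f n ≤ ∑ n ∈ s, f n := by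
  induction s using Finset.induction_on_max with
  | empty => simp
  | insert a s ha ih =>
    have ha' : a ∉ s := fun h => lt_irrefl a (ha a h)
    have hcard : #s ≤ a := by
      simpa using card_le_card (fun x hx => mem_range.2 (ha x hx) : s ⊆ range a)
    rw [card_insert_of_notMem ha', sum_range_succ, sum_insert ha', add_comm]
    exact add_le_add (hf hcard) ih

lemma sum_union_le_sum_add_sum {ι M : Type*} [DecidableEq ι] [AddCommMonoid M] [PartialOrder M]
    [CanonicallyOrderedAdd M] (s t : Finset ι) (f : ι → M) :
    ∑ i ∈ s ∪ t, f i ≤ ∑ i ∈ s, f i + ∑ i ∈ t, f i :=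
  le_self_add.trans_eq sum_union_inter

lemma psiL_le_sum (E : Finset ℕ) (L : ℕ) : PsiL E L ≤ ∑ n ∈ E, (2 : ℤ) ^ nabla4 n := by
  have hL : (1 - (L : ℤ)) * 2 ^ L ≤ 1 := by
    rcases L with _ | L
    · simp
    · have : (0 : ℤ) ≤ L * 2 ^ (L + 1) := by positivity
      push_cast
      linear_combination this
  have hsum : ∑ n ∈ E, (2 : ℤ) ^ min (nabla4 n) L ≤ ∑ n ∈ E, (2 : ℤ) ^ nabla4 n :=
    sum_le_sum fun n _ => pow_le_pow_right₀ one_le_two (min_le_left _ _)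
  rw [PsiL]
  linarith

lemma psiL_le_psi (E : Finset ℕ) (L : ℕ) : PsiL E L ≤ Psi E :=
  le_csSup ⟨_, Set.forall_mem_range.2 (psiL_le_sum E)⟩ (Set.mem_range_self L)

lemma le_psi_add_psi (A B : Finset ℕ) {L j : ℕ} (hN : #(A ∪ B) = tri L + j) :
    ((j : ℤ) + 1 - L) * 2 ^ L - 1 ≤ Psi A + Psi B := by
  have hmono : Monotone fun n => 2 ^ min (nabla4 n) L := fun _ _ h =>
    Nat.pow_le_pow_right two_pos (min_le_min_right L (nabla4_monotone h))
  have hsum : ∑ n ∈ range (tri L + j), 2 ^ min (nabla4 n) L ≤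
      ∑ n ∈ A, 2 ^ min (nabla4 n) L + ∑ n ∈ B, 2 ^ min (nabla4 n) L :=
    hN ▸ (sum_range_card_le_sum hmono _).trans (sum_union_le_sum_add_sum A B _)
  have hrange := sum_range_two_pow_min_nabla4 L j
  zify at hsum hrange
  have hA := psiL_le_psi A L
  have hB := psiL_le_psi B L
  rw [PsiL] at hA hB
  linear_combination hA + hB + hsum - hrange

/-- For finite `A, B ⊂ ℕ` with `N := |A ∪ B|`,
`Ψ(A) + Ψ(B) ≥ (Φ(4, N+3) − 5)/4`. -/
theorem psi_union (A B : Finset ℕ) :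
    Psi A + Psi B ≥ ((Phi4 ((A ∪ B).card + 3) : ℤ) - 5) / 4 := by
  set N := (A ∪ B).card
  obtain ⟨L, hL⟩ : ∃ L, nabla4 (N + 3) = L + 2 :=
    ⟨nabla4 (N + 3) - 2, by have := le_nabla4_iff.2 (show tri 2 ≤ N + 3 by simp [tri]); omega⟩
  have hlo : tri (L + 2) ≤ N + 3 := le_nabla4_iff.1 hL.ge
  have hhi : N + 3 < tri (L + 2) + (L + 3) := tri_succ (L + 2) ▸ nabla4_lt_iff.1 (by omega)
  obtain ⟨i, hi, hNi⟩ : ∃ i ≤ L + 3, N + 3 = tri (L + 2) + i :=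
    ⟨N + 3 - tri (L + 2), by omega, by omega⟩
  have hPhi := phi4_tri_add_add_two_pow hi
  rw [← hNi] at hPhi
  have hPhi_sub_five : (Phi4 (N + 3) : ℤ) - 5 = 4 * ((((2 * L + i : ℕ) : ℤ) + 1 - L) * 2 ^ L - 1) := by
    zify at hPhi
    push_cast
    linear_combination hPhi
  rw [ge_iff_le, hPhi_sub_five, Int.mul_ediv_cancel_left _ four_ne_zero]
  exact le_psi_add_psi A B (by rw [tri_succ, tri_succ] at hNi; omega)
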